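/- Let X be a real d×n matrix, with d ≥ 1 and k ≥ 1 output neurons. Suppose that the complete dual constraint holds for all weight matrices, i.e. for every W₁ ∈ ℝ^{k×d} and W₂ ∈ ℝ^{k×n} satisfying W₂ = W₁ X (second dual constraint with Y₁ = W₁X) we also have W₁ = W₂ Xᵀ, and for every W₂ ∈ ℝ^{k×n} and W₁ ∈ ℝ^{k×d} satisfying W₁ = W₂ Xᵀ we also have W₂ = W₁ X. Then X Xᵀ = I_d and Xᵀ X = I_n. -/
import Mathlib


open Matrix

lemma eq_one_of_forall_mul {k m : ℕ} (hk : 1 ≤ k) (A : Matrix (Fin m) (Fin m) ℝ)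
    (h : ∀ W : Matrix (Fin k) (Fin m) ℝ, W = W * A) : A = 1 := by
  ext i j
  have := congrArg (fun M => M ⟨0, hk⟩ j) (h (Matrix.single ⟨0, hk⟩ i 1))
  simp [Matrix.mul_apply, Matrix.single, Matrix.one_apply, eq_comm] at this ⊢
  simpa [Finset.sum_ite_eq] using this

/-- **Impossible complete duality.** If for every pair of weight matrices the
complete dual constraint holds (in both directions), then the samples of `X`
must be uncorrelated with unit variance: `X * Xᵀ = 1` and `Xᵀ * X = 1`. -/
theorem complete_duality_impossible
    {d n k : ℕ} (hd : 1 ≤ d) (hk : 1 ≤ k)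
    (X : Matrix (Fin d) (Fin n) ℝ)
    (h1 : ∀ (W₁ : Matrix (Fin k) (Fin d) ℝ) (W₂ : Matrix (Fin k) (Fin n) ℝ),
      W₂ = W₁ * X → W₁ = W₂ * Xᵀ)
    (h2 : ∀ (W₂ : Matrix (Fin k) (Fin n) ℝ) (W₁ : Matrix (Fin k) (Fin d) ℝ),
      W₁ = W₂ * Xᵀ → W₂ = W₁ * X) :
    X * Xᵀ = 1 ∧ Xᵀ * X = 1 := by
  constructor
  · apply eq_one_of_forall_mul hk
    intro W
    have := h1 W (W * X) rfl
    rwa [Matrix.mul_assoc] at this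
  · apply eq_one_of_forall_mul hk
    intro W
    have := h2 W (W * Xᵀ) rfl
    rwa [Matrix.mul_assoc] at this
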